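/- arXiv:1304.4440 — 4 statements merged into one kernel-verified Lean document; each statement's English description precedes it below -/
import Mathlib

section
/- Let O_K = ℤ[√−2] with norm N(a+b√−2) = a²+2b², let k be a positive integer, and let ρ : O_K^k → (O_K/3O_K)^k be componentwise reduction modulo 3O_K. For a coset r ∈ O_K/3O_K and real q with 0 < q < 1, set θ_r(q) = Σ_{x ∈ O_K, x ≡ r (mod 3O_K)} q^{N(x)/3}. Then for every (O_K/3O_K)-submodule C of (O_K/3O_K)^k (a code of length k over O_K/3O_K): Σ_{x ∈ ρ⁻¹(C)} q^{(N(x₁)+⋯+N(x_k))/3} = Σ_{c ∈ C} θ₀(q)^{n₀(c)} · θ₁(q)^{n₁(c)} · θ₂(q)^{n₂(c)} · θ₃(q)^{n₃(c)}, where n_l(c) is the number of coordinates cᵢ of c whose coset has length l (i.e. min{N(y) : y ∈ O_K, y mod 3O_K = cᵢ} = l), and θ_l denotes the common value of θ_r over all cosets r of length l, namely θ₀(q) = Σ_{a,b∈ℤ} q^{3a²+6b²}, θ₁(q) = Σ_{a,b∈ℤ} q^{3(a+1/3)²+6b²}, θ₂(q) = Σ_{a,b∈ℤ} q^{3a²+6(b+1/3)²},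 θ₃(q) = Σ_{a,b∈ℤ} q^{3(a+1/3)²+6(b+1/3)²}. In other words, the theta series of the lattice (1/√3)ρ⁻¹(C) equals the length weight enumerator lwe_C(θ₀,θ₁,θ₂,θ₃). -/
/-!
Every coset of `3O_K` contains an element `a + b√−2` with `a, b ∈ {−1, 0, 1}`, whose norm
`|a| + 2|b|` is the length of the coset, and the coset is `{(3m + a) + (3n + b)√−2}`, so its theta
series `Σ q^{N(y)/3}` is a shifted lattice sum that, after the sign changes `m ↦ −m`, `n ↦ −n`,
is `θ_{|a|+2|b|}`. Since `q^{Σ N(xᵢ)/3} = Π q^{N(xᵢ)/3}` and all terms are positive, the sum over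
`ρ⁻¹(C)` splits as a sum over `c ∈ C` of products over the coordinates of the coset sums.
-/

noncomputable section

/-- `O_K = ℤ[√−2]`, with `Zsqrtd.norm (a + b√−2) = a² + 2b²`. -/
abbrev OK : Type := Zsqrtd (-2)

/-- The ideal `3·O_K`. -/
def I3 : Ideal OK := Ideal.span ({3} : Set OK)

/-- The quotient ring `R = O_K/3O_K`. -/
abbrev R3 : Type := OK ⧸ I3

/-- Reduction modulo `3O_K`. -/
def mk3 : OK →+* R3 := Ideal.Quotient.mk I3

/-- The length of a coset `r ∈ O_K/3O_K`: `min {N(y) : y ∈ O_K, y mod 3O_K = r}`. -/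
def cosetLen (r : R3) : ℕ :=
  sInf {m : ℕ | ∃ y : OK, mk3 y = r ∧ y.norm = (m : ℤ)}

/-- `n_l(c)`: the number of coordinates of `c` whose coset has length `l`. -/
def nLen {k : ℕ} (l : ℕ) (c : Fin k → R3) : ℕ :=
  (Finset.univ.filter fun i => cosetLen (c i) = l).card

/-- `θ₀(q) = Σ_{a,b∈ℤ} q^{3a²+6b²}`. -/
def theta0 (q : ℝ) : ℝ := ∑' p : ℤ × ℤ, q ^ (3 * (p.1 : ℝ) ^ 2 + 6 * (p.2 : ℝ) ^ 2)

/-- `θ₁(q) = Σ_{a,b∈ℤ} q^{3(a+1/3)²+6b²}`. -/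
def theta1 (q : ℝ) : ℝ := ∑' p : ℤ × ℤ, q ^ (3 * ((p.1 : ℝ) + 1/3) ^ 2 + 6 * (p.2 : ℝ) ^ 2)

/-- `θ₂(q) = Σ_{a,b∈ℤ} q^{3a²+6(b+1/3)²}`. -/
def theta2 (q : ℝ) : ℝ := ∑' p : ℤ × ℤ, q ^ (3 * (p.1 : ℝ) ^ 2 + 6 * ((p.2 : ℝ) + 1/3) ^ 2)

/-- `θ₃(q) = Σ_{a,b∈ℤ} q^{3(a+1/3)²+6(b+1/3)²}`. -/
def theta3 (q : ℝ) : ℝ :=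
  ∑' p : ℤ × ℤ, q ^ (3 * ((p.1 : ℝ) + 1/3) ^ 2 + 6 * ((p.2 : ℝ) + 1/3) ^ 2)

theorem hasSum_pi_prod {n : ℕ} {α : Fin n → Type*} {f : ∀ i, α i → ℝ} {s : Fin n → ℝ}
    (hf0 : ∀ i a, 0 ≤ f i a) (hf : ∀ i, HasSum (f i) (s i)) :
    HasSum (fun x : ∀ i, α i => ∏ i, f i (x i)) (∏ i, s i) := by
  induction n with
  | zero => simp
  | succ n ih =>
    have htail := ih (fun i a => hf0 i.succ a) (fun i => hf i.succ)
    have hcons : (fun x : ∀ i, α i => ∏ i, f i (x i)) ∘ Fin.consEquiv α =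
        fun p => f 0 p.1 * ∏ i : Fin n, f i.succ (p.2 i) := by
      ext ⟨a, x⟩
      simp [Fin.consEquiv, Fin.prod_univ_succ]
    rw [← (Fin.consEquiv α).hasSum_iff, hcons, Fin.prod_univ_succ]
    have htail0 : 0 ≤ fun x : ∀ i : Fin n, α i.succ => ∏ i, f i.succ (x i) :=
      fun x => Finset.prod_nonneg fun i _ => hf0 i.succ (x i)
    have hsum := (hf 0).summable.mul_of_nonneg htail.summable (hf0 0) htail0
    exact ((hf 0).mul htail hsum :)

theorem tsum_subtype_comp_eq_tsum_tsum_fiber {α β M : Type*} [AddCommGroup M] [UniformSpace M]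
    [IsUniformAddGroup M] [CompleteSpace M] [T0Space M] (f : α → β) (p : β → Prop)
    {F : α → M} (hF : Summable F) :
    ∑' x : {x // p (f x)}, F x = ∑' y : {y // p y}, ∑' x : {x // f x = y}, F x := by
  let e := Equiv.sigmaSubtypeFiberEquivSubtype f (p := fun x => p (f x)) (q := p) fun _ => Iff.rfl
  rw [← e.tsum_eq]
  exact (e.summable_iff.2 (hF.subtype _)).tsum_sigma

theorem tsum_pi_fiber_prod {n : ℕ} {α β : Type*} (f : α → β) (c : Fin n → β) {g : α → ℝ}
    (hg0 : 0 ≤ g) (hg : Summable g) :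
    ∑' x : {x : Fin n → α // (fun i => f (x i)) = c}, ∏ i, g (x.1 i) =
      ∏ i, ∑' y : {y // f y = c i}, g y := by
  let e : {x : Fin n → α // (fun i => f (x i)) = c} ≃ ∀ i, {y // f y = c i} :=
    (Equiv.subtypeEquivRight fun _ => funext_iff).trans
      (Equiv.subtypePiEquivPi (p := fun i y => f y = c i))
  rw [← e.symm.tsum_eq]
  exact (hasSum_pi_prod (f := fun i (y : {y // f y = c i}) => g y) (fun i y => hg0 y)
    fun i => (hg.subtype _).hasSum).tsum_eq

lemma mk3_eq_mk3_iff (x y : OK) :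
    mk3 x = mk3 y ↔ (3 : ℤ) ∣ x.re - y.re ∧ (3 : ℤ) ∣ x.im - y.im := by
  rw [mk3, Ideal.Quotient.eq, I3, Ideal.mem_span_singleton,
    show (3 : OK) = ((3 : ℤ) : OK) by norm_cast, Zsqrtd.intCast_dvd]
  rfl

lemma norm_eq_sq_add (y : OK) : y.norm = y.re ^ 2 + 2 * y.im ^ 2 := by
  rw [Zsqrtd.norm_def]; ring

lemma exists_mk3_eq (r : R3) : ∃ a b : ℤ, a.natAbs ≤ 1 ∧ b.natAbs ≤ 1 ∧ mk3 ⟨a, b⟩ = r := by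
  obtain ⟨y, rfl⟩ := Ideal.Quotient.mk_surjective (I := I3) r
  refine ⟨(y.re + 1) % 3 - 1, (y.im + 1) % 3 - 1, by omega, by omega, ?_⟩
  exact (mk3_eq_mk3_iff _ _).2 ⟨by dsimp only; omega, by dsimp only; omega⟩

lemma natAbs_le_sq_of_three_dvd_sub {x a : ℤ} (ha : a.natAbs ≤ 1) (h : (3 : ℤ) ∣ x - a) :
    (a.natAbs : ℤ) ≤ x ^ 2 := by
  rcases Nat.le_one_iff_eq_zero_or_eq_one.1 ha with h0 | h1
  · rw [h0]; positivity
  · have : x ≠ 0 := by omega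
    rw [h1, Nat.cast_one]
    exact Int.one_le_abs this |>.trans (Int.le_self_sq _) |>.trans_eq (sq_abs x)

lemma cosetLen_mk3 {a b : ℤ} (ha : a.natAbs ≤ 1) (hb : b.natAbs ≤ 1) :
    cosetLen (mk3 ⟨a, b⟩) = a.natAbs + 2 * b.natAbs := by
  refine IsLeast.csInf_eq ⟨⟨⟨a, b⟩, rfl, ?_⟩, ?_⟩
  · rw [norm_eq_sq_add, ← Int.natAbs_sq a, ← Int.natAbs_sq b]
    interval_cases a.natAbs <;> interval_cases b.natAbs <;> norm_num
  · rintro m ⟨y, hy, hm⟩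
    obtain ⟨hre, him⟩ := (mk3_eq_mk3_iff _ _).1 hy
    have := natAbs_le_sq_of_three_dvd_sub ha hre
    have := natAbs_le_sq_of_three_dvd_sub hb him
    rw [norm_eq_sq_add] at hm
    omega

lemma cosetLen_le_three (r : R3) : cosetLen r ≤ 3 := by
  obtain ⟨a, b, ha, hb, rfl⟩ := exists_mk3_eq r
  rw [cosetLen_mk3 ha hb]
  omega

lemma natAbs_add_natAbs_le_norm (y : OK) : (y.re.natAbs : ℝ) + y.im.natAbs ≤ y.norm := by
  have hre : ((y.re.natAbs : ℤ) : ℝ) ≤ ((y.re ^ 2 : ℤ) : ℝ) := Int.cast_le.2 y.re.natAbs_le_self_sq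
  have him : ((y.im.natAbs : ℤ) : ℝ) ≤ ((y.im ^ 2 : ℤ) : ℝ) := Int.cast_le.2 y.im.natAbs_le_self_sq
  rw [norm_eq_sq_add, Nat.cast_natAbs, Nat.cast_natAbs]
  push_cast at hre him ⊢
  nlinarith [sq_nonneg (y.im : ℝ)]

/-- `θ_l`, written as the theta series of the coset of `(l % 2) + (l / 2)√−2`, of length `l`. -/
def thetaLen (l : ℕ) (q : ℝ) : ℝ :=
  ∑' p : ℤ × ℤ,
    q ^ (3 * ((p.1 : ℝ) + (l % 2 : ℕ) / 3) ^ 2 + 6 * ((p.2 : ℝ) + (l / 2 : ℕ) / 3) ^ 2)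

def fiberEquiv (a b : ℤ) : ℤ × ℤ ≃ {y : OK // mk3 y = mk3 ⟨a, b⟩} where
  toFun p := ⟨⟨3 * p.1 + a, 3 * p.2 + b⟩, (mk3_eq_mk3_iff _ _).2 ⟨by simp, by simp⟩⟩
  invFun y := ((y.1.re - a) / 3, (y.1.im - b) / 3)
  left_inv p := by ext <;> dsimp only <;> omega
  right_inv := by
    rintro ⟨y, hy⟩
    obtain ⟨hre, him⟩ := (mk3_eq_mk3_iff _ _).1 hy
    ext <;> dsimp only at hre him ⊢ <;> omega

section

variable {q : ℝ}

lemma tsum_fiber_mk3_eq_thetaLen {a b : ℤ} (ha : a.natAbs ≤ 1) (hb : b.natAbs ≤ 1) :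
    ∑' y : {y : OK // mk3 y = mk3 ⟨a, b⟩}, q ^ ((y.1.norm : ℝ) / 3) =
      thetaLen (a.natAbs + 2 * b.natAbs) q := by
  obtain ⟨u, hu⟩ := (Int.associated_natAbs a).symm
  obtain ⟨v, hv⟩ := (Int.associated_natAbs b).symm
  rw [← (((Units.mulLeft u).prodCongr (Units.mulLeft v)).trans (fiberEquiv a b)).tsum_eq,
    thetaLen, show (a.natAbs + 2 * b.natAbs) % 2 = a.natAbs by omega,
    show (a.natAbs + 2 * b.natAbs) / 2 = b.natAbs by omega]
  refine tsum_congr fun p => congrArg (q ^ ·) ?_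
  have hu2 : ((u : ℤ) : ℝ) ^ 2 = 1 := by exact_mod_cast Int.isUnit_sq u.isUnit
  have hv2 : ((v : ℤ) : ℝ) ^ 2 = 1 := by exact_mod_cast Int.isUnit_sq v.isUnit
  generalize a.natAbs = i at hu ⊢
  generalize b.natAbs = j at hv ⊢
  subst hu hv
  simp only [Equiv.trans_apply, Equiv.prodCongr_apply, Prod.map, Units.mulLeft_apply, fiberEquiv,
    Equiv.coe_fn_mk, norm_eq_sq_add]
  push_cast
  linear_combination (3 * (p.1 + i / 3) ^ 2) * hu2 + (6 * (p.2 + j / 3) ^ 2) * hv2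

lemma tsum_coset_eq_thetaLen (r : R3) :
    ∑' y : {y : OK // mk3 y = r}, q ^ ((y.1.norm : ℝ) / 3) = thetaLen (cosetLen r) q := by
  obtain ⟨a, b, ha, hb, rfl⟩ := exists_mk3_eq r
  rw [cosetLen_mk3 ha hb, tsum_fiber_mk3_eq_thetaLen ha hb]

lemma summable_rpow_natAbs_div_three (hq0 : 0 < q) (hq1 : q < 1) :
    Summable fun n : ℤ => q ^ ((n.natAbs : ℝ) / 3) := by
  have hgeom : Summable fun n : ℕ => (q ^ (1 / 3 : ℝ)) ^ n :=
    summable_geometric_of_lt_one (by positivity) (Real.rpow_lt_one hq0.le hq1 (by norm_num))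
  have key : ∀ n : ℤ, q ^ ((n.natAbs : ℝ) / 3) = (q ^ (1 / 3 : ℝ)) ^ n.natAbs := fun n => by
    rw [← Real.rpow_mul_natCast hq0.le]; ring_nf
  simp only [key]
  exact .of_nat_of_neg (by simpa using hgeom) (by simpa using hgeom)

lemma summable_rpow_norm_div_three (hq0 : 0 < q) (hq1 : q < 1) :
    Summable fun y : OK => q ^ ((y.norm : ℝ) / 3) := by
  have h := summable_rpow_natAbs_div_three hq0 hq1
  have hinj : Function.Injective fun y : OK => (y.re, y.im) := fun y z h => by
    simpa [Zsqrtd.ext_iff] using h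
  refine ((h.mul_of_nonneg h (fun _ => by positivity) fun _ => by positivity).comp_injective
    hinj).of_nonneg_of_le (fun _ => by positivity) fun y => ?_
  rw [Function.comp_apply, ← Real.rpow_add hq0, ← add_div]
  refine Real.rpow_le_rpow_of_exponent_ge hq0 hq1.le ?_
  gcongr
  exact natAbs_add_natAbs_le_norm y

lemma prod_thetaLen_cosetLen {k : ℕ} (c : Fin k → R3) :
    ∏ i, thetaLen (cosetLen (c i)) q =
      theta0 q ^ nLen 0 c * theta1 q ^ nLen 1 c * theta2 q ^ nLen 2 c * theta3 q ^ nLen 3 c := by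
  rw [← Finset.prod_fiberwise_of_maps_to' (t := Finset.range 4) (f := (thetaLen · q))
    fun i _ => Finset.mem_range.2 (Nat.lt_succ_of_le (cosetLen_le_three (c i)))]
  simp [Finset.prod_range_succ, nLen, thetaLen, theta0, theta1, theta2, theta3]

end

theorem theta_series_eq_lwe_general (k : ℕ) (q : ℝ) (hq0 : 0 < q) (hq1 : q < 1)
    (C : Submodule R3 (Fin k → R3)) :
    (∑' x : {x : Fin k → OK // (fun i => mk3 (x i)) ∈ C},
        q ^ ((∑ i, ((x.1 i).norm : ℝ)) / 3)) =
    ∑' c : C, theta0 q ^ nLen 0 (c : Fin k → R3) * theta1 q ^ nLen 1 (c : Fin k → R3) *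
        theta2 q ^ nLen 2 (c : Fin k → R3) * theta3 q ^ nLen 3 (c : Fin k → R3) := by
  set g : OK → ℝ := fun y => q ^ ((y.norm : ℝ) / 3)
  have hg0 : 0 ≤ g := fun y => by positivity
  have hg := summable_rpow_norm_div_three hq0 hq1
  have hprod : Summable fun x : Fin k → OK => ∏ i, g (x i) :=
    (hasSum_pi_prod (fun _ y => hg0 y) fun _ => hg.hasSum).summable
  calc _ = ∑' x : {x : Fin k → OK // (fun i => mk3 (x i)) ∈ C}, ∏ i, g (x.1 i) := by
        simp_rw [Finset.sum_div, Real.rpow_sum_of_pos hq0]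
        rfl
    _ = ∑' c : C, ∑' x : {x : Fin k → OK // (fun i => mk3 (x i)) = c}, ∏ i, g (x.1 i) :=
        tsum_subtype_comp_eq_tsum_tsum_fiber (fun x i => mk3 (x i)) (· ∈ C) hprod
    _ = ∑' c : C, ∏ i, thetaLen (cosetLen ((c : Fin k → R3) i)) q := by
        refine tsum_congr fun c => ?_
        rw [tsum_pi_fiber_prod mk3 _ hg0 hg]
        exact Finset.prod_congr rfl fun i _ => tsum_coset_eq_thetaLen _
    _ = _ := by simp_rw [prod_thetaLen_cosetLen]

/-- For any code `C` of length `k` over `O_K/3O_K`, the theta series of the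
lattice `(1/√3)·ρ⁻¹(C)` equals the length weight enumerator `lwe_C(θ₀, θ₁, θ₂, θ₃)`. -/
theorem theta_series_eq_lwe (k : ℕ) (hk : 0 < k) (q : ℝ) (hq0 : 0 < q) (hq1 : q < 1)
    (C : Submodule R3 (Fin k → R3)) :
    (∑' x : {x : Fin k → OK // (fun i => mk3 (x i)) ∈ C},
        q ^ ((∑ i, ((x.1 i).norm : ℝ)) / 3)) =
    ∑' c : C, theta0 q ^ nLen 0 (c : Fin k → R3) * theta1 q ^ nLen 1 (c : Fin k → R3) *
        theta2 q ^ nLen 2 (c : Fin k → R3) * theta3 q ^ nLen 3 (c : Fin k → R3) :=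
  theta_series_eq_lwe_general k q hq0 hq1 C
end
end

section
/- For every real q with 0 < q < 1: Σ_{a,b∈ℤ} q^{3(a+1/3)²+6b²} = (1/2)·(Σ_{m∈ℤ} q^{m²/3} − Σ_{m∈ℤ} q^{3m²})·(Σ_{m∈ℤ} q^{6m²}), i.e. θ₁ = (1/2)(ϑ₃(τ/3) − ϑ₃(3τ))·ϑ₃(6τ) where q = e^{πiτ}. -/
/-!
Since `3(a + 1/3)² = (3a + 1)²/3`, the double sum factors as `(Σ_a q^((3a+1)²/3)) · ϑ₃(6τ)`.
Splitting `ϑ₃(τ/3) = Σ_m q^(m²/3)` according to `m mod 3`, the class `0` gives `ϑ₃(3τ)`, and the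
classes `1` and `2 ≡ -1` each give `Σ_a q^((3a+1)²/3)`, because `m ↦ -m` exchanges them.
-/

open Real

lemma Int.tsum_eq_sum_tsum_mul_add {R : Type*} [AddCommGroup R] [UniformSpace R]
    [IsUniformAddGroup R] [CompleteSpace R] [T0Space R] {f : ℤ → R} (hf : Summable f)
    (n : ℕ) [NeZero n] :
    ∑' m, f m = ∑ j : Fin n, ∑' k : ℤ, f (k * n + j) := by
  rw [← ((Int.divModEquiv n).trans (Equiv.prodComm _ _)).symm.tsum_eq f, Summable.tsum_prod,
    tsum_fintype]
  · rfl
  · exact hf.comp_injective (Equiv.injective _)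

lemma summable_rpow_mul_sq {q c : ℝ} (hq0 : 0 < q) (hq1 : q < 1) (hc : 0 < c) :
    Summable fun n : ℤ => q ^ (c * (n : ℝ) ^ 2) := by
  have hnat : Summable fun n : ℕ => q ^ (c * (n : ℝ) ^ 2) := by
    refine (summable_geometric_of_lt_one (rpow_nonneg hq0.le c)
      (rpow_lt_one hq0.le hq1 hc)).of_nonneg_of_le (fun n => by positivity) fun n => ?_
    rw [← rpow_natCast (q ^ c) n, ← rpow_mul hq0.le]
    exact rpow_le_rpow_of_exponent_ge hq0 hq1.le
      (mul_le_mul_of_nonneg_left (mod_cast Nat.le_self_pow two_ne_zero n) hc.le)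
  exact .of_nat_of_neg (by simpa using hnat) (by simpa using hnat)

lemma tsum_rpow_sq_div_three {q : ℝ} (hq0 : 0 < q) (hq1 : q < 1) :
    ∑' m : ℤ, q ^ ((m : ℝ) ^ 2 / 3) =
      ∑' m : ℤ, q ^ (3 * (m : ℝ) ^ 2) + 2 * ∑' k : ℤ, q ^ (((k * 3 + 1 : ℤ) : ℝ) ^ 2 / 3) := by
  set g : ℤ → ℝ := fun m => q ^ ((m : ℝ) ^ 2 / 3)
  have hg : Summable g := by
    simpa only [g, div_eq_inv_mul] using summable_rpow_mul_sq hq0 hq1 (c := 3⁻¹) (by norm_num)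
  have hres0 : ∀ k : ℤ, g (k * 3 + 0) = q ^ (3 * (k : ℝ) ^ 2) := fun k => by
    simp only [g]; congr 1; push_cast; ring
  -- `k ↦ -k - 1` carries the class of `2` onto the negatives of the class of `1`
  have hres2 : ∑' k : ℤ, g (k * 3 + 2) = ∑' k : ℤ, g (k * 3 + 1) := by
    rw [← ((Equiv.neg ℤ).trans (Equiv.subRight 1)).tsum_eq]
    refine tsum_congr fun k => ?_
    simp only [g, Equiv.trans_apply, Equiv.neg_apply, Equiv.subRight_apply]
    congr 1; push_cast; ring
  rw [Int.tsum_eq_sum_tsum_mul_add hg 3, Fin.sum_univ_three]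
  simp only [Fin.val_zero, Fin.val_one, Fin.val_two, Nat.cast_ofNat, Nat.cast_zero, Nat.cast_one]
  rw [tsum_congr hres0, hres2]
  ring

/-- For `0 < q < 1`:
`θ₁ = Σ_{a,b∈ℤ} q^{3(a+1/3)²+6b²} = (1/2)(ϑ₃(τ/3) − ϑ₃(3τ))·ϑ₃(6τ)`. -/
theorem theta1_eq (q : ℝ) (h0 : 0 < q) (h1 : q < 1) :
    (∑' p : ℤ × ℤ, q ^ (3 * ((p.1 : ℝ) + 1/3) ^ 2 + 6 * (p.2 : ℝ) ^ 2)) =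
      (1 / 2) * ((∑' m : ℤ, q ^ ((m : ℝ) ^ 2 / 3)) - ∑' m : ℤ, q ^ (3 * (m : ℝ) ^ 2)) *
        (∑' m : ℤ, q ^ (6 * (m : ℝ) ^ 2)) := by
  have hA : Summable fun a : ℤ => q ^ (3 * ((a : ℝ) + 1/3) ^ 2) := by
    refine (summable_rpow_mul_sq h0 h1 (c := 3⁻¹) (by norm_num)).comp_injective
      (i := fun a : ℤ => a * 3 + 1) (fun a b h => by dsimp only at h; omega) |>.congr fun a => ?_
    simp only [Function.comp_apply]; congr 1; push_cast; ring
  have hB := summable_rpow_mul_sq h0 h1 (c := 6) (by norm_num)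
  have hprod : ∑' p : ℤ × ℤ, q ^ (3 * ((p.1 : ℝ) + 1/3) ^ 2 + 6 * (p.2 : ℝ) ^ 2) =
      (∑' a : ℤ, q ^ (3 * ((a : ℝ) + 1/3) ^ 2)) * ∑' b : ℤ, q ^ (6 * (b : ℝ) ^ 2) := by
    rw [tsum_mul_tsum_of_summable_norm hA.norm hB.norm]
    exact tsum_congr fun p => rpow_add h0 _ _
  have hcoset : ∀ a : ℤ, 3 * ((a : ℝ) + 1/3) ^ 2 = ((a * 3 + 1 : ℤ) : ℝ) ^ 2 / 3 := fun a => by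
    push_cast; ring
  rw [hprod, tsum_rpow_sq_div_three h0 h1]
  simp only [hcoset]
  ring
end

section
/- For every real q with 0 < q < 1: Σ_{a,b∈ℤ} q^{3a²+6(b+1/3)²} = (1/2)·(Σ_{m∈ℤ} q^{3m²})·(Σ_{m∈ℤ} q^{2m²/3} − Σ_{m∈ℤ} q^{6m²}), i.e. θ₂ = (1/2)ϑ₃(3τ)·(ϑ₃(2τ/3) − ϑ₃(6τ)) where q = e^{πiτ}. -/
/-!
Factor the double sum as `ϑ₃(3τ) · Σ_m q^{6(m+1/3)²}`. Splitting `Σ_m q^{2m²/3}` by the residue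
of `m` modulo 3 gives `Σ_{j=0,1,2} Σ_k q^{6(k+j/3)²}`, and the classes `j = 1, 2` contribute
equally because `k + 2/3 = -((-1-k) + 1/3)`; hence `ϑ₃(2τ/3) = ϑ₃(6τ) + 2 Σ_m q^{6(m+1/3)²}`.
-/

open Real

lemma summable_rpow_mul_add_sq {q c : ℝ} (h0 : 0 < q) (h1 : q < 1) (hc : 0 < c) (d : ℝ) :
    Summable fun n : ℤ => q ^ (c * ((n : ℝ) + d) ^ 2) := by
  -- the Gaussian `exp (-π (n + d)² t)` with `t = -c log q / π`
  have ht : 0 < -log q * c / π := div_pos (mul_pos (neg_pos.mpr (log_neg h0 h1)) hc) pi_pos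
  refine (HurwitzKernelBounds.summable_f_int 0 d ht).congr fun n => ?_
  rw [HurwitzKernelBounds.f_int, pow_zero, one_mul, rpow_def_of_pos h0]
  congr 1
  field_simp

lemma tsum_int_eq_sum_tsum_mul_add {α : Type*} [AddCommGroup α] [UniformSpace α]
    [IsUniformAddGroup α] [CompleteSpace α] [T0Space α] (N : ℕ) [NeZero N] {f : ℤ → α}
    (hf : Summable f) :
    ∑' m, f m = ∑ j : Fin N, ∑' k : ℤ, f (k * N + j) := by
  let e : Fin N × ℤ ≃ ℤ := (Equiv.prodComm _ _).trans (Int.divModEquiv N).symm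
  rw [← e.tsum_eq]
  exact ((e.summable_iff.mpr hf).tsum_prod).trans (tsum_fintype _)

lemma tsum_int_add_one_sub {α : Type*} [AddCommMonoid α] [TopologicalSpace α] {φ : ℝ → α}
    (hφ : φ.Even) (d : ℝ) :
    ∑' n : ℤ, φ (n + (1 - d)) = ∑' n : ℤ, φ (n + d) := by
  rw [← (Equiv.subLeft (-1 : ℤ)).tsum_eq]
  refine tsum_congr fun n => ?_
  rw [← hφ]
  congr 1
  simp only [Equiv.subLeft_apply]
  push_cast
  ring

lemma tsum_rpow_two_mul_sq_div_three {q : ℝ} (h0 : 0 < q) (h1 : q < 1) :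
    ∑' m : ℤ, q ^ (2 * (m : ℝ) ^ 2 / 3) =
      ∑' m : ℤ, q ^ (6 * (m : ℝ) ^ 2) + 2 * ∑' m : ℤ, q ^ (6 * ((m : ℝ) + 1/3) ^ 2) := by
  have hsum : Summable fun m : ℤ => q ^ (2 * (m : ℝ) ^ 2 / 3) := by
    simpa [mul_div_right_comm] using
      summable_rpow_mul_add_sq h0 h1 (by norm_num : (0 : ℝ) < 2 / 3) 0
  have hres (k : ℤ) (j : ℕ) :
      2 * ((k * (3 : ℕ) + j : ℤ) : ℝ) ^ 2 / 3 = 6 * ((k : ℝ) + j / 3) ^ 2 := by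
    push_cast; ring
  have hsym := tsum_int_add_one_sub (φ := fun x : ℝ => q ^ (6 * x ^ 2))
    (fun x => by simp only [neg_sq]) (1 / 3)
  rw [tsum_int_eq_sum_tsum_mul_add 3 hsum, Fin.sum_univ_three]
  simp only [hres]
  norm_num at hsym ⊢
  rw [hsym]
  ring

/-- For `0 < q < 1`:
`θ₂ = Σ_{a,b∈ℤ} q^{3a²+6(b+1/3)²} = (1/2)ϑ₃(3τ)·(ϑ₃(2τ/3) − ϑ₃(6τ))`. -/
theorem theta2_eq (q : ℝ) (h0 : 0 < q) (h1 : q < 1) :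
    (∑' p : ℤ × ℤ, q ^ (3 * (p.1 : ℝ) ^ 2 + 6 * ((p.2 : ℝ) + 1/3) ^ 2)) =
      (1 / 2) * (∑' m : ℤ, q ^ (3 * (m : ℝ) ^ 2)) *
        ((∑' m : ℤ, q ^ (2 * (m : ℝ) ^ 2 / 3)) - ∑' m : ℤ, q ^ (6 * (m : ℝ) ^ 2)) := by
  have hA : Summable fun m : ℤ => q ^ (3 * (m : ℝ) ^ 2) := by
    simpa using summable_rpow_mul_add_sq h0 h1 three_pos 0
  have hB := summable_rpow_mul_add_sq h0 h1 (by norm_num : (0 : ℝ) < 6) (1 / 3)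
  have hfactor : (∑' p : ℤ × ℤ, q ^ (3 * (p.1 : ℝ) ^ 2 + 6 * ((p.2 : ℝ) + 1/3) ^ 2)) =
      (∑' m : ℤ, q ^ (3 * (m : ℝ) ^ 2)) * ∑' m : ℤ, q ^ (6 * ((m : ℝ) + 1/3) ^ 2) := by
    rw [tsum_mul_tsum_of_summable_norm hA.norm hB.norm]
    exact tsum_congr fun p => rpow_add h0 _ _
  rw [hfactor, tsum_rpow_two_mul_sq_div_three h0 h1]
  ring
end

section
/- Let G be the 8×8 integer matrix G = [[2,1,0,−1,0,2,−1,−2],[1,2,−1,0,1,0,−1,−2],[0,−1,2,−1,−1,2,0,2],[−1,0,−1,2,1,−2,1,0],[0,1,−1,1,3,0,0,0],[2,0,2,−2,0,6,0,0],[−1,−1,0,1,0,0,3,0],[−2,−2,2,0,0,0,0,6]]. Then the numbers of vectors u ∈ ℤ⁸ with u G uᵀ = m are: 1 for m = 0, 0 for m = 1, 32 for m = 2, 128 for m = 3, and 240 for m = 4. Equivalently, the theta series of the 8-dimensional odd 2-modular lattice with Gram matrix G begins 1 + 32q² + 128q³ + 240q⁴ + ⋯. -/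
/-!
The vectors with `u 4 + u 6` even form a sublattice `L₀` of index 2, and `embed 0` is an isometry
onto it from `D₄ ⊥ √2ℤ⁴`: `qD4` is the norm of `(a, b, c - d, a + b + c + d)`, which runs over the
vectors of `ℤ⁴` with even coordinate sum. The other coset `L₀ + e₄` is parametrized by
`embed 1 = embed 0 + e₄`, on which the norm splits as `|y|² + |z|² / 2` with `y` running over the
vectors of `ℤ⁴` with odd coordinate sum and `z` over `(2ℤ + 1)⁴`. So on each coset the number of
vectors of norm `m` is a convolution of two four-dimensional counts, which are finite enumerations
once the norms are at most `4`. With `Θ_{D₄} = 1 + 24q² + 24q⁴ + ⋯` and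
`Θ_{√2ℤ⁴} = 1 + 8q² + 24q⁴ + ⋯`, the even coset gives `1 + 32q² + 240q⁴ + ⋯`, and the odd one
`8q · 16q² + ⋯ = 128q³ + ⋯`.
-/

open Matrix

/-- The Gram matrix of the 8-dimensional odd 2-modular lattice `(1/√3)ρ⁻¹(C)`. -/
def G : Matrix (Fin 8) (Fin 8) ℤ :=
  !![2, 1, 0, -1, 0, 2, -1, -2;
     1, 2, -1, 0, 1, 0, -1, -2;
     0, -1, 2, -1, -1, 2, 0, 2;
     -1, 0, -1, 2, 1, -2, 1, 0;
     0, 1, -1, 1, 3, 0, 0, 0;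
     2, 0, 2, -2, 0, 6, 0, 0;
     -1, -1, 0, 1, 0, 0, 3, 0;
     -2, -2, 2, 0, 0, 0, 0, 6]

open Finset Function

section LevelSets

variable {α β : Type*} (f : α → ℤ) (g : β → ℤ) (s : Finset α) (t : Finset β) (m : ℤ)

theorem setOf_add_eq_eq_coe_filter (hf : ∀ x, 0 ≤ f x) (hg : ∀ y, 0 ≤ g y)
    (hs : ∀ x, f x ≤ m → x ∈ s) (ht : ∀ y, g y ≤ m → y ∈ t) :
    {v : α × β | f v.1 + g v.2 = m} = ↑{v ∈ s ×ˢ t | f v.1 + g v.2 = m} := by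
  ext ⟨x, y⟩
  simp only [Set.mem_ofPred_eq, coe_filter, mem_product]
  refine ⟨fun h => ⟨⟨hs x ?_, ht y ?_⟩, h⟩, And.right⟩ <;> linarith [hf x, hg y]

theorem card_filter_add_eq_sum (hf : ∀ x ∈ s, 0 ≤ f x) (hg : ∀ y ∈ t, 0 ≤ g y) :
    #{v ∈ s ×ˢ t | f v.1 + g v.2 = m} =
      ∑ k ∈ Icc 0 m, #{x ∈ s | f x = k} * #{y ∈ t | g y = m - k} := by
  have hmaps : ∀ v ∈ {v ∈ s ×ˢ t | f v.1 + g v.2 = m}, f v.1 ∈ Icc 0 m := by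
    intro v hv
    simp only [mem_filter, mem_product] at hv
    simp only [mem_Icc]
    constructor <;> linarith [hf _ hv.1.1, hg _ hv.1.2]
  rw [card_eq_sum_card_fiberwise hmaps]
  refine sum_congr rfl fun k _ => ?_
  rw [← card_product]
  congr 1
  ext ⟨x, y⟩
  simp only [mem_filter, mem_product]
  constructor
  · rintro ⟨⟨⟨hx, hy⟩, h⟩, rfl⟩
    exact ⟨⟨hx, rfl⟩, hy, by linarith⟩
  · rintro ⟨⟨hx, rfl⟩, hy, h⟩
    exact ⟨⟨⟨hx, hy⟩, by linarith⟩, rfl⟩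

end LevelSets

abbrev Z4 := ℤ × ℤ × ℤ × ℤ

def embed (ε : ℤ) : Z4 × Z4 → Fin 8 → ℤ
  | ((a, b, c, d), (p, q, r, s)) =>
    ![-(a + b + c + d + p + q + r + s), d - p, -a + p - q - r + s, -a - b - d + r, p - r + ε,
      q + r, -p - r, -p - s]

def qD4 : Z4 → ℤ
  | (a, b, c, d) => a ^ 2 + b ^ 2 + (c - d) ^ 2 + (a + b + c + d) ^ 2

def qD4Odd : Z4 → ℤ
  | (a, b, c, d) => a ^ 2 + (b - 1) ^ 2 + (c - d) ^ 2 + (a + b + c + d) ^ 2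

def qA1Four : Z4 → ℤ
  | (p, q, r, s) => 2 * (p ^ 2 + q ^ 2 + r ^ 2 + s ^ 2)

def qA1FourOdd : Z4 → ℤ
  | (p, q, r, s) => 2 * (p * (p + 1) + q * (q + 1) + r * (r - 1) + s * (s - 1)) + 2

theorem norm_embed_zero (v : Z4 × Z4) :
    embed 0 v ⬝ᵥ G *ᵥ embed 0 v = qD4 v.1 + qA1Four v.2 := by
  obtain ⟨⟨a, b, c, d⟩, p, q, r, s⟩ := v
  simp only [embed, qD4, qA1Four, G, dotProduct, mulVec, Fin.sum_univ_eight, of_apply, cons_val',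
    cons_val_fin_one, Matrix.cons_val, cons_val_zero, cons_val_one]
  ring

theorem norm_embed_one (v : Z4 × Z4) :
    embed 1 v ⬝ᵥ G *ᵥ embed 1 v = qD4Odd v.1 + qA1FourOdd v.2 := by
  obtain ⟨⟨a, b, c, d⟩, p, q, r, s⟩ := v
  simp only [embed, qD4Odd, qA1FourOdd, G, dotProduct, mulVec, Fin.sum_univ_eight, of_apply,
    cons_val', cons_val_fin_one, Matrix.cons_val, cons_val_zero, cons_val_one]
  ring

theorem embed_injective (ε : ℤ) : Injective (embed ε) := by
  rintro ⟨⟨a, b, c, d⟩, p, q, r, s⟩ ⟨⟨a', b', c', d'⟩, p', q', r', s'⟩ h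
  have := fun i => congrFun h i
  simp only [embed, Fin.forall_fin_succ, cons_val_zero, cons_val_succ] at this
  simp only [Prod.mk.injEq]
  omega

theorem embed_apply_four_add_six (ε : ℤ) (v : Z4 × Z4) :
    embed ε v 4 + embed ε v 6 = ε - 2 * v.2.2.2.1 := by
  obtain ⟨⟨a, b, c, d⟩, p, q, r, s⟩ := v
  simp only [embed, Matrix.cons_val]
  ring

theorem disjoint_range_embed : Disjoint (Set.range (embed 0)) (Set.range (embed 1)) := by
  rw [Set.disjoint_left]
  rintro _ ⟨v, rfl⟩ ⟨w, hw⟩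
  have h := embed_apply_four_add_six 1 w
  rw [hw, embed_apply_four_add_six] at h
  omega

theorem mem_range_embed {u : Fin 8 → ℤ} {ε k : ℤ} (h : u 4 + u 6 = 2 * k + ε) :
    u ∈ Set.range (embed ε) := by
  refine ⟨((-u 2 - u 5 - u 7, -u 1 + u 2 - u 3 - u 4 + ε + u 5 + u 7,
    -u 0 + u 3 - u 5 + u 7 + k, u 1 + u 4 - ε - k), (u 4 - ε - k, u 5 + k, -k,
    k - u 4 + ε - u 7)), funext fun i => ?_⟩
  fin_cases i <;> simp only [embed, Fin.reduceFinMk, Fin.zero_eta, Fin.mk_one, Matrix.cons_val,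
    cons_val_zero, cons_val_one] <;> omega

theorem range_embed_union : Set.range (embed 0) ∪ Set.range (embed 1) = Set.univ := by
  refine Set.eq_univ_of_forall fun u => ?_
  obtain ⟨k, hk | hk⟩ := Int.even_or_odd' (u 4 + u 6)
  · exact .inl (mem_range_embed (by rw [hk, add_zero]))
  · exact .inr (mem_range_embed hk)

theorem setOf_norm_eq_image_union (m : ℤ) :
    {u : Fin 8 → ℤ | u ⬝ᵥ G *ᵥ u = m} =
      embed 0 '' {v | qD4 v.1 + qA1Four v.2 = m} ∪
        embed 1 '' {v | qD4Odd v.1 + qA1FourOdd v.2 = m} := by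
  calc {u : Fin 8 → ℤ | u ⬝ᵥ G *ᵥ u = m}
      = {u | u ⬝ᵥ G *ᵥ u = m} ∩ (Set.range (embed 0) ∪ Set.range (embed 1)) := by
        rw [range_embed_union, Set.inter_univ]
    _ = embed 0 '' (embed 0 ⁻¹' {u | u ⬝ᵥ G *ᵥ u = m}) ∪
          embed 1 '' (embed 1 ⁻¹' {u | u ⬝ᵥ G *ᵥ u = m}) := by
        rw [Set.inter_union_distrib_left, Set.image_preimage_eq_inter_range,
          Set.image_preimage_eq_inter_range]
    _ = _ := by simp only [Set.preimage_ofPred_eq, norm_embed_zero, norm_embed_one]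

theorem qD4_nonneg (x : Z4) : 0 ≤ qD4 x := by
  obtain ⟨a, b, c, d⟩ := x
  simp only [qD4]; positivity

theorem qD4Odd_nonneg (x : Z4) : 0 ≤ qD4Odd x := by
  obtain ⟨a, b, c, d⟩ := x
  simp only [qD4Odd]; positivity

theorem qA1Four_nonneg (y : Z4) : 0 ≤ qA1Four y := by
  obtain ⟨p, q, r, s⟩ := y
  simp only [qA1Four]; positivity

theorem Int.mul_add_one_nonneg (p : ℤ) : 0 ≤ p * (p + 1) := by
  rcases le_or_gt 0 p with h | h <;> nlinarith

theorem qA1FourOdd_nonneg (y : Z4) : 0 ≤ qA1FourOdd y := by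
  obtain ⟨p, q, r, s⟩ := y
  have := Int.mul_add_one_nonneg p; have := Int.mul_add_one_nonneg q
  have := Int.mul_add_one_nonneg (-r); have := Int.mul_add_one_nonneg (-s)
  simp only [qA1FourOdd]; linarith

noncomputable def boxD4 : Finset Z4 := Icc (-2) 2 ×ˢ Icc (-2) 2 ×ˢ Icc (-3) 3 ×ˢ Icc (-3) 3

noncomputable def boxD4Odd : Finset Z4 := Icc (-2) 2 ×ˢ Icc (-1) 3 ×ˢ Icc (-3) 3 ×ˢ Icc (-3) 3

noncomputable def boxA1Four : Finset Z4 := Icc (-1) 1 ×ˢ Icc (-1) 1 ×ˢ Icc (-1) 1 ×ˢ Icc (-1) 1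

noncomputable def boxA1FourOdd : Finset Z4 := Icc (-1) 0 ×ˢ Icc (-1) 0 ×ˢ Icc 0 1 ×ˢ Icc 0 1

theorem mem_boxD4 {x : Z4} (hx : qD4 x ≤ 4) : x ∈ boxD4 := by
  obtain ⟨a, b, c, d⟩ := x
  simp only [qD4] at hx
  have h₂ : 2 * a ^ 2 + 2 * b ^ 2 + (2 * c + a + b) ^ 2 + (2 * d + a + b) ^ 2 ≤ 8 := by linarith
  have := sq_nonneg a; have := sq_nonneg b
  have := sq_nonneg (2 * c + a + b); have := sq_nonneg (2 * d + a + b)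
  have ha := abs_lt_of_sq_lt_sq' (show a ^ 2 < 3 ^ 2 by linarith) (by norm_num)
  have hb := abs_lt_of_sq_lt_sq' (show b ^ 2 < 3 ^ 2 by linarith) (by norm_num)
  have hc := abs_lt_of_sq_lt_sq' (show (2 * c + a + b) ^ 2 < 3 ^ 2 by linarith) (by norm_num)
  have hd := abs_lt_of_sq_lt_sq' (show (2 * d + a + b) ^ 2 < 3 ^ 2 by linarith) (by norm_num)
  simp only [boxD4, mem_product, mem_Icc]
  omega

theorem mem_boxD4Odd {x : Z4} (hx : qD4Odd x ≤ 4) : x ∈ boxD4Odd := by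
  obtain ⟨a, b, c, d⟩ := x
  simp only [qD4Odd] at hx
  have h₂ : 2 * a ^ 2 + 2 * (b - 1) ^ 2 + (2 * c + a + b) ^ 2 + (2 * d + a + b) ^ 2 ≤ 8 := by
    linarith
  have := sq_nonneg a; have := sq_nonneg (b - 1)
  have := sq_nonneg (2 * c + a + b); have := sq_nonneg (2 * d + a + b)
  have ha := abs_lt_of_sq_lt_sq' (show a ^ 2 < 3 ^ 2 by linarith) (by norm_num)
  have hb := abs_lt_of_sq_lt_sq' (show (b - 1) ^ 2 < 3 ^ 2 by linarith) (by norm_num)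
  have hc := abs_lt_of_sq_lt_sq' (show (2 * c + a + b) ^ 2 < 3 ^ 2 by linarith) (by norm_num)
  have hd := abs_lt_of_sq_lt_sq' (show (2 * d + a + b) ^ 2 < 3 ^ 2 by linarith) (by norm_num)
  simp only [boxD4Odd, mem_product, mem_Icc]
  omega

theorem mem_boxA1Four {y : Z4} (hy : qA1Four y ≤ 4) : y ∈ boxA1Four := by
  obtain ⟨p, q, r, s⟩ := y
  simp only [qA1Four] at hy
  have := sq_nonneg p; have := sq_nonneg q; have := sq_nonneg r; have := sq_nonneg s
  have hp := abs_lt_of_sq_lt_sq' (show p ^ 2 < 2 ^ 2 by linarith) (by norm_num)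
  have hq := abs_lt_of_sq_lt_sq' (show q ^ 2 < 2 ^ 2 by linarith) (by norm_num)
  have hr := abs_lt_of_sq_lt_sq' (show r ^ 2 < 2 ^ 2 by linarith) (by norm_num)
  have hs := abs_lt_of_sq_lt_sq' (show s ^ 2 < 2 ^ 2 by linarith) (by norm_num)
  simp only [boxA1Four, mem_product, mem_Icc]
  omega

theorem mem_boxA1FourOdd {y : Z4} (hy : qA1FourOdd y ≤ 4) : y ∈ boxA1FourOdd := by
  obtain ⟨p, q, r, s⟩ := y
  simp only [qA1FourOdd] at hy
  have := Int.mul_add_one_nonneg p; have := Int.mul_add_one_nonneg q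
  have := Int.mul_add_one_nonneg (-r); have := Int.mul_add_one_nonneg (-s)
  have hp := abs_lt_of_sq_lt_sq' (show (2 * p + 1) ^ 2 < 3 ^ 2 by linarith) (by norm_num)
  have hq := abs_lt_of_sq_lt_sq' (show (2 * q + 1) ^ 2 < 3 ^ 2 by linarith) (by norm_num)
  have hr := abs_lt_of_sq_lt_sq' (show (2 * r - 1) ^ 2 < 3 ^ 2 by linarith) (by norm_num)
  have hs := abs_lt_of_sq_lt_sq' (show (2 * s - 1) ^ 2 < 3 ^ 2 by linarith) (by norm_num)
  simp only [boxA1FourOdd, mem_product, mem_Icc]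
  omega

theorem ncard_setOf_norm_eq_sum {m : ℤ} (hm : m ≤ 4) :
    {u : Fin 8 → ℤ | u ⬝ᵥ G *ᵥ u = m}.ncard =
      ∑ k ∈ Icc 0 m, #{x ∈ boxD4 | qD4 x = k} * #{y ∈ boxA1Four | qA1Four y = m - k} +
      ∑ k ∈ Icc 0 m, #{x ∈ boxD4Odd | qD4Odd x = k} * #{y ∈ boxA1FourOdd | qA1FourOdd y = m - k} := by
  rw [setOf_norm_eq_image_union,
    setOf_add_eq_eq_coe_filter _ _ boxD4 boxA1Four m qD4_nonneg qA1Four_nonneg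
      (fun _ h => mem_boxD4 (h.trans hm)) (fun _ h => mem_boxA1Four (h.trans hm)),
    setOf_add_eq_eq_coe_filter _ _ boxD4Odd boxA1FourOdd m qD4Odd_nonneg qA1FourOdd_nonneg
      (fun _ h => mem_boxD4Odd (h.trans hm)) (fun _ h => mem_boxA1FourOdd (h.trans hm)),
    Set.ncard_union_eq (disjoint_range_embed.mono (Set.image_subset_range _ _)
      (Set.image_subset_range _ _)), Set.ncard_image_of_injective _ (embed_injective 0),
    Set.ncard_image_of_injective _ (embed_injective 1), Set.ncard_coe_finset, Set.ncard_coe_finset,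
    card_filter_add_eq_sum _ _ _ _ _ (fun x _ => qD4_nonneg x) (fun y _ => qA1Four_nonneg y),
    card_filter_add_eq_sum _ _ _ _ _ (fun x _ => qD4Odd_nonneg x) (fun y _ => qA1FourOdd_nonneg y)]

set_option maxRecDepth 100000 in
/-- The theta series of the lattice with Gram matrix `G` begins
`1 + 32q² + 128q³ + 240q⁴ + ⋯`: the number of `u ∈ ℤ⁸` with `u G uᵀ = m` is
`1, 0, 32, 128, 240` for `m = 0, 1, 2, 3, 4`. -/
theorem theta_coeffs_of_G :
    Set.ncard {u : Fin 8 → ℤ | u ⬝ᵥ G.mulVec u = 0} = 1 ∧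
    Set.ncard {u : Fin 8 → ℤ | u ⬝ᵥ G.mulVec u = 1} = 0 ∧
    Set.ncard {u : Fin 8 → ℤ | u ⬝ᵥ G.mulVec u = 2} = 32 ∧
    Set.ncard {u : Fin 8 → ℤ | u ⬝ᵥ G.mulVec u = 3} = 128 ∧
    Set.ncard {u : Fin 8 → ℤ | u ⬝ᵥ G.mulVec u = 4} = 240 := by
  refine ⟨?_, ?_, ?_, ?_, ?_⟩ <;> rw [ncard_setOf_norm_eq_sum (by norm_num)] <;> decide
end
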